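/- In any folding of the open HP chain Z_{2k}, either exactly three walls of the bounding box contain images of H monomers and the fourth wall contains only the PP edge, or all four walls of the bounding box contain images of H monomers. -/

import Mathlib

/-! ## Basic definitions for the 2D HP model on the square lattice ℤ² -/

/-- A lattice point. -/
abbrev Pt : Type := ℤ × ℤ

/-- Two lattice points are adjacent (at Euclidean distance 1). -/
def adjPt (p q : Pt) : Prop := (p.1 - q.1).natAbs + (p.2 - q.2).natAbs = 1

/-- Chain adjacency (consecutiveness) of monomer indices in an open chain of length `n`. -/
def openAdj (n : ℕ) (i j : Fin n) : Prop := i.val + 1 = j.val ∨ j.val + 1 = i.val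

/-- Chain adjacency of monomer indices in a closed chain of length `n`
(consecutive cyclically, so also the pair `{n-1, 0}`). -/
def closedAdj (n : ℕ) (i j : Fin n) : Prop :=
  (i.val + 1) % n = j.val ∨ (j.val + 1) % n = i.val

/-- A folding of an open chain of `n` monomers: an injective map into ℤ² sending
consecutive monomers to adjacent lattice points. -/
def IsOpenFolding (n : ℕ) (pos : Fin n → Pt) : Prop :=
  Function.Injective pos ∧ ∀ i j : Fin n, i.val + 1 = j.val → adjPt (pos i) (pos j)

/-- A folding of a closed chain of `n` monomers: an injective map into ℤ² sending
cyclically consecutive monomers to adjacent lattice points. -/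
def IsClosedFolding (n : ℕ) (pos : Fin n → Pt) : Prop :=
  Function.Injective pos ∧ ∀ i j : Fin n, (i.val + 1) % n = j.val → adjPt (pos i) (pos j)

/-- Monomers `i` and `j` form a contact in a folding `pos` of the open chain with labels `c`
(`true` = H, `false` = P): both are H, they are not consecutive along the chain, and their
images are lattice-adjacent. -/
def openContactRel (n : ℕ) (c : Fin n → Bool) (pos : Fin n → Pt) (i j : Fin n) : Prop :=
  c i = true ∧ c j = true ∧ ¬ openAdj n i j ∧ adjPt (pos i) (pos j)

/-- Contact relation for a folding of a closed chain. -/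
def closedContactRel (n : ℕ) (c : Fin n → Bool) (pos : Fin n → Pt) (i j : Fin n) : Prop :=
  c i = true ∧ c j = true ∧ ¬ closedAdj n i j ∧ adjPt (pos i) (pos j)

/-- The set of contacts (as unordered pairs) of a folding of an open chain. -/
def openContactSet (n : ℕ) (c : Fin n → Bool) (pos : Fin n → Pt) : Set (Sym2 (Fin n)) :=
  {e | ∃ i j : Fin n, e = s(i, j) ∧ openContactRel n c pos i j}

/-- The set of contacts (as unordered pairs) of a folding of a closed chain. -/
def closedContactSet (n : ℕ) (c : Fin n → Bool) (pos : Fin n → Pt) : Set (Sym2 (Fin n)) :=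
  {e | ∃ i j : Fin n, e = s(i, j) ∧ closedContactRel n c pos i j}

/-- The number of contacts of a folding of an open chain. -/
noncomputable def openContacts (n : ℕ) (c : Fin n → Bool) (pos : Fin n → Pt) : ℕ :=
  (openContactSet n c pos).ncard

/-- The number of contacts of a folding of a closed chain. -/
noncomputable def closedContacts (n : ℕ) (c : Fin n → Bool) (pos : Fin n → Pt) : ℕ :=
  (closedContactSet n c pos).ncard

/-- A folding of an open chain is optimal if it maximizes the number of contacts. -/
def OpenOptimal (n : ℕ) (c : Fin n → Bool) (pos : Fin n → Pt) : Prop :=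
  IsOpenFolding n pos ∧
    ∀ pos', IsOpenFolding n pos' → openContacts n c pos' ≤ openContacts n c pos

/-- A folding of a closed chain is optimal if it maximizes the number of contacts. -/
def ClosedOptimal (n : ℕ) (c : Fin n → Bool) (pos : Fin n → Pt) : Prop :=
  IsClosedFolding n pos ∧
    ∀ pos', IsClosedFolding n pos' → closedContacts n c pos' ≤ closedContacts n c pos

/-- The number of H-labeled monomers of a chain. -/
def hCount (n : ℕ) (c : Fin n → Bool) : ℕ :=
  (Finset.univ.filter fun i : Fin n => c i = true).card

/-- The contact graph of a folding of an open chain. -/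
def openContactGraph (n : ℕ) (c : Fin n → Bool) (pos : Fin n → Pt) : SimpleGraph (Fin n) :=
  SimpleGraph.fromRel (openContactRel n c pos)

/-- The contact graph of a folding of a closed chain. -/
def closedContactGraph (n : ℕ) (c : Fin n → Bool) (pos : Fin n → Pt) : SimpleGraph (Fin n) :=
  SimpleGraph.fromRel (closedContactRel n c pos)

/-- The conformation graph of a folding of a closed chain: chain edges together with contacts. -/
def conformationGraph (n : ℕ) (c : Fin n → Bool) (pos : Fin n → Pt) : SimpleGraph (Fin n) :=
  SimpleGraph.fromRel (fun i j => closedAdj n i j ∨ closedContactRel n c pos i j)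

/-- Squared Euclidean distance between lattice points. -/
def sqDist (p q : Pt) : ℤ := (p.1 - q.1) ^ 2 + (p.2 - q.2) ^ 2

/-- An isometry of the lattice ℤ² (exactly the translations, rotations by multiples of 90°,
reflections, and their compositions). -/
def IsLatticeIsometry (T : Pt → Pt) : Prop :=
  Function.Bijective T ∧ ∀ p q, sqDist (T p) (T q) = sqDist p q

/-- Two foldings are congruent if one is the image of the other under an isometry of ℤ². -/
def FoldingCongruent (n : ℕ) (pos pos' : Fin n → Pt) : Prop :=
  ∃ T : Pt → Pt, IsLatticeIsometry T ∧ ∀ i, pos' i = T (pos i)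

/-! ## Specific chains -/

/-- The chain (PHP)^m (for `n = 3m`): H exactly at positions ≡ 1 mod 3 (0-indexed). -/
def phpLabel (n : ℕ) : Fin n → Bool := fun i => decide (i.val % 3 = 1)

/-- The closed chain `S_k = P (HP)^u P (HP)^d` of length `2k+2`, where
`u = ⌈k/2⌉` and `d = ⌊k/2⌋` (0-indexed labels). -/
def skLabel (k : ℕ) : Fin (2*k+2) → Bool := fun i =>
  if i.val ≤ 2 * ((k+1)/2) then decide (i.val % 2 = 1) else decide (i.val % 2 = 0)

/-- The open chain `Z_{2k} = (HP)^k (PH)^k` of length `4k` (0-indexed labels). -/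
def zLabel (k : ℕ) : Fin (4*k) → Bool := fun i =>
  if i.val < 2*k then decide (i.val % 2 = 0) else decide (i.val % 2 = 1)

/-- The direction of the `j`-th edge of the folding `F_k` of `S_k`:
`E (ES)^d W (WN)^u` when `k` is even and `E (ES)^d S (WN)^u` when `k` is odd,
where `E = (1,0)`, `W = (-1,0)`, `N = (0,1)`, `S = (0,-1)`. -/
def fkDir (k : ℕ) (j : ℕ) : Pt :=
  if j = 0 then (1, 0)
  else if j ≤ 2 * (k/2) then (if j % 2 = 1 then (1, 0) else (0, -1))
  else if j = 2 * (k/2) + 1 then (if k % 2 = 0 then (-1, 0) else (0, -1))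
  else if (j - (2 * (k/2) + 2)) % 2 = 0 then (-1, 0) else (0, 1)

/-- The position of monomer `i` in the folding `F_k` of the closed chain `S_k`. -/
def fkPos (k : ℕ) (i : Fin (2*k+2)) : Pt := ∑ j ∈ Finset.range i.val, fkDir k j

/-- The direction of the `j`-th edge of the standard folding of `Z_{2k}`: the PP edge
(edge `2k-1`) is horizontal, the two edges adjacent to it descend from it, and the two
halves of the chain form two parallel staircases. -/
def stdZDir (k : ℕ) (j : ℕ) : Pt :=
  if j ≤ 2*k - 1 then (if j % 2 = 0 then (0, 1) else (-1, 0))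
  else if j = 2*k then (0, -1)
  else if j % 2 = 1 then (0, -1) else (1, 0)

/-- The position of monomer `i` in the standard folding of the open chain `Z_{2k}`. -/
def stdZPos (k : ℕ) (i : Fin (4*k)) : Pt := ∑ j ∈ Finset.range i.val, stdZDir k j

/-! ## Geometry: polygon of a closed folding, bounding box, missing contacts -/

/-- The real point corresponding to a lattice point. -/
def toR (p : Pt) : ℝ × ℝ := ((p.1 : ℝ), (p.2 : ℝ))

/-- The closed polygonal curve in ℝ² traced by a folded closed chain. -/
def polygonOf (n : ℕ) (pos : Fin n → Pt) : Set (ℝ × ℝ) :=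
  ⋃ i : Fin n, segment ℝ (toR (pos i))
    (toR (pos ⟨(i.val + 1) % n, Nat.mod_lt _ (Nat.lt_of_le_of_lt (Nat.zero_le i.val) i.isLt)⟩))

/-- `q` lies in the (closed) axis-parallel bounding box of the folding `pos`. -/
def inBBox (n : ℕ) (pos : Fin n → Pt) (q : Pt) : Prop :=
  (∃ i, (pos i).1 ≤ q.1) ∧ (∃ i, q.1 ≤ (pos i).1) ∧
  (∃ i, (pos i).2 ≤ q.2) ∧ (∃ i, q.2 ≤ (pos i).2)

/-- `q` lies on the wall `w` of the bounding box of the folding `pos`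
(`0` = east, `1` = west, `2` = north, `3` = south). -/
def onWall (n : ℕ) (pos : Fin n → Pt) (w : Fin 4) (q : Pt) : Prop :=
  inBBox n pos q ∧
    (if w = 0 then ∀ i, (pos i).1 ≤ q.1
     else if w = 1 then ∀ i, q.1 ≤ (pos i).1
     else if w = 2 then ∀ i, (pos i).2 ≤ q.2
     else ∀ i, q.2 ≤ (pos i).2)

/-- The segment from `p` to `q` lies along the boundary of the bounding box
(both endpoints on a common wall). -/
def edgeOnBoundary (n : ℕ) (pos : Fin n → Pt) (p q : Pt) : Prop :=
  ∃ w : Fin 4, onWall n pos w p ∧ onWall n pos w q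

/-- The missing contacts of a folding of an open chain: pairs `(v, q)` where `v` is an
H monomer and `q` is a lattice point adjacent to the image of `v` that is occupied
neither by a chain-neighbor of `v` nor by any H monomer.  The corresponding lattice
edge is the one from `pos v` to `q`. -/
def missingContactSet (n : ℕ) (c : Fin n → Bool) (pos : Fin n → Pt) : Set (Fin n × Pt) :=
  {vq | c vq.1 = true ∧ adjPt (pos vq.1) vq.2 ∧
        (∀ w : Fin n, openAdj n vq.1 w → pos w ≠ vq.2) ∧
        (∀ u : Fin n, c u = true → pos u ≠ vq.2)}

/-- A straight H node: a non-endpoint H monomer lying, together with both of its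
chain-neighbors, on a common wall of the bounding box. -/
def isStraightH (n : ℕ) (c : Fin n → Bool) (pos : Fin n → Pt) (i : Fin n) : Prop :=
  c i = true ∧ i.val ≠ 0 ∧ i.val ≠ n - 1 ∧
  ∃ w : Fin 4, onWall n pos w (pos i) ∧ ∀ j : Fin n, openAdj n i j → onWall n pos w (pos j)

/-- A coupled straight H node: a straight H node such that the preceding or following
H monomer along the chain lies on the same wall. -/
def isCoupledH (n : ℕ) (c : Fin n → Bool) (pos : Fin n → Pt) (i : Fin n) : Prop :=
  isStraightH n c pos i ∧
  ∃ w : Fin 4, onWall n pos w (pos i) ∧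
    ∃ j : Fin n, c j = true ∧ j ≠ i ∧ onWall n pos w (pos j) ∧
      ((j.val < i.val ∧ ∀ l : Fin n, j.val < l.val → l.val < i.val → c l = false) ∨
       (i.val < j.val ∧ ∀ l : Fin n, i.val < l.val → l.val < j.val → c l = false))

/-- A solitary straight H node: a straight H node that is not coupled. -/
def isSolitaryH (n : ℕ) (c : Fin n → Bool) (pos : Fin n → Pt) (i : Fin n) : Prop :=
  isStraightH n c pos i ∧ ¬ isCoupledH n c pos i

/-! ## Graph-theoretic notions -/

/-- A graph is a disjoint union of even cycles (plus isolated vertices): every vertex has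
degree 0 or 2, and the graph has no odd cycles (is 2-colorable). -/
def IsDisjointUnionOfEvenCycles {V : Type*} (G : SimpleGraph V) : Prop :=
  (∀ v, (G.neighborSet v).ncard = 0 ∨ (G.neighborSet v).ncard = 2) ∧ G.Colorable 2

/-- A graph consists of exactly `k` vertex-disjoint 4-cycles (plus isolated vertices). -/
def IsDisjointUnionOfFourCycles {V : Type*} (G : SimpleGraph V) (k : ℕ) : Prop :=
  ∃ f : Fin k × Fin 4 → V, Function.Injective f ∧
    ∀ a b : V, G.Adj a b ↔ ∃ m : Fin k, ∃ i j : Fin 4,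
      a = f (m, i) ∧ b = f (m, j) ∧ ((i.val + 1) % 4 = j.val ∨ (j.val + 1) % 4 = i.val)

/-- The vertex set `s` induces a 4-cycle of `G`: it has 4 elements, each of which has
exactly two neighbors inside `s`. -/
def IsFourCycleIn {V : Type*} (G : SimpleGraph V) (s : Set V) : Prop :=
  s.ncard = 4 ∧ ∀ v ∈ s, (s ∩ {u | G.Adj v u}).ncard = 2

/-- The chain position of the `a`-th H monomer (0-indexed) of the closed chain `S_k`. -/
def hIdx (k : ℕ) (a : Fin k) : Fin (2*k+2) :=
  if a.val + 1 ≤ (k+1)/2 then ⟨2*a.val+1, by have := a.isLt; omega⟩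
  else ⟨2*a.val+2, by have := a.isLt; omega⟩
def wdir : Fin 4 → Pt := fun w =>
  if w.val = 0 then (1,0) else if w.val = 1 then (-1,0) else if w.val = 2 then (0,1) else (0,-1)

def wcoord (w : Fin 4) (p : Pt) : ℤ := (wdir w).1 * p.1 + (wdir w).2 * p.2

lemma zLabel_iff (k : ℕ) (i : Fin (4*k)) :
    zLabel k i = true ↔ ((i.val < 2*k ∧ i.val % 2 = 0) ∨ (2*k ≤ i.val ∧ i.val % 2 = 1)) := by
  unfold zLabel; split_ifs with h <;> simp <;> omega

lemma adjPt_symm {p q : Pt} (h : adjPt p q) : adjPt q p := by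
  unfold adjPt at *; omega

lemma onWall_pos_iff {n : ℕ} (pos : Fin n → Pt) (w : Fin 4) (j : Fin n) :
    onWall n pos w (pos j) ↔ ∀ i, wcoord w (pos i) ≤ wcoord w (pos j) := by
  have hbox : inBBox n pos (pos j) := ⟨⟨j, le_refl _⟩, ⟨j, le_refl _⟩, ⟨j, le_refl _⟩, ⟨j, le_refl _⟩⟩
  fin_cases w <;>
    simp only [onWall, wcoord, wdir, hbox, true_and, Fin.ext_iff] <;> norm_num <;>
    constructor <;> (intro h i; have := h i) <;> omega

lemma adj_shift (w : Fin 4) {p q : Pt} (h : adjPt p q) :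
    wcoord w p - wcoord w q ≤ 1 ∧ wcoord w q - wcoord w p ≤ 1 ∧
    (wcoord w q - wcoord w p = 1 → p = (q.1 - (wdir w).1, q.2 - (wdir w).2)) := by
  obtain ⟨p1, p2⟩ := p; obtain ⟨q1, q2⟩ := q
  unfold adjPt at h
  fin_cases w <;> simp only [wcoord, wdir, Prod.ext_iff] <;> norm_num <;> omega

lemma wall_clash (w w' : Fin 4) (hne : w ≠ w') (pa pb p0 : Pt) (hab : pa ≠ pb)
    (h1 : wcoord w pb ≤ wcoord w pa) (h2 : wcoord w pa ≤ wcoord w pb)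
    (h3 : wcoord w' pb ≤ wcoord w' pa) (h4 : wcoord w' pa ≤ wcoord w' pb)
    (h6 : wcoord w' p0 ≤ wcoord w' pa) : wcoord w pa ≤ wcoord w p0 := by
  obtain ⟨a1, a2⟩ := pa; obtain ⟨b1, b2⟩ := pb; obtain ⟨c1, c2⟩ := p0
  simp only [ne_eq, Prod.mk.injEq, not_and] at hab
  fin_cases w <;> fin_cases w' <;>
    first
      | exact absurd rfl hne
      | (simp only [wcoord, wdir] at *; norm_num at *; omega)

lemma core_wall (k : ℕ) (hk : 1 ≤ k) (pos : Fin (4*k) → Pt) (hf : IsOpenFolding (4*k) pos)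
    (w : Fin 4) (hno : ∀ i, zLabel k i = true → ¬ onWall (4*k) pos w (pos i)) :
    onWall (4*k) pos w (pos ⟨2*k - 1, by have := hf; omega⟩) ∧ onWall (4*k) pos w (pos ⟨2*k, by have := hf; omega⟩) ∧
    ∀ i, onWall (4*k) pos w (pos i) → i.val = 2*k - 1 ∨ i.val = 2*k := by
  obtain ⟨hinj, hadj⟩ := hf
  obtain ⟨i0, -, hmax⟩ := Finset.exists_max_image Finset.univ
    (fun i => wcoord w (pos i)) ⟨⟨0, by omega⟩, Finset.mem_univ _⟩
  have hM : ∀ i, wcoord w (pos i) ≤ wcoord w (pos i0) := fun i => hmax i (Finset.mem_univ _)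
  have wallIff : ∀ j, onWall (4*k) pos w (pos j) ↔ wcoord w (pos i0) ≤ wcoord w (pos j) := by
    intro j
    rw [onWall_pos_iff]
    exact ⟨fun h => h i0, fun h i => le_trans (hM i) h⟩
  -- Step 1
  have step1 : ∀ j : Fin (4*k), wcoord w (pos i0) ≤ wcoord w (pos j) →
      j.val = 2*k - 1 ∨ j.val = 2*k := by
    intro j hj
    by_contra hcon
    push_neg at hcon
    have hPj : ¬ ((j.val < 2*k ∧ j.val % 2 = 0) ∨ (2*k ≤ j.val ∧ j.val % 2 = 1)) := by
      intro h
      exact hno j ((zLabel_iff k j).2 h) ((wallIff j).2 hj)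
    have hjlt := j.isLt
    have hge1 : 1 ≤ j.val := by omega
    have hle : j.val + 1 < 4*k := by omega
    set jm : Fin (4*k) := ⟨j.val - 1, by omega⟩ with hjm
    set jp : Fin (4*k) := ⟨j.val + 1, by omega⟩ with hjp
    have lm : zLabel k jm = true := (zLabel_iff k jm).2 (by simp only [hjm]; omega)
    have lp : zLabel k jp = true := (zLabel_iff k jp).2 (by simp only [hjp]; omega)
    have a1 : adjPt (pos jm) (pos j) := hadj jm j (by simp only [hjm]; try omega)
    have a2 : adjPt (pos jp) (pos j) := adjPt_symm (hadj j jp (by simp only [hjp]; try omega))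
    have nm : wcoord w (pos jm) < wcoord w (pos i0) := by
      have := hno jm lm; rw [wallIff] at this; omega
    have np : wcoord w (pos jp) < wcoord w (pos i0) := by
      have := hno jp lp; rw [wallIff] at this; omega
    have hjM : wcoord w (pos j) = wcoord w (pos i0) := le_antisymm (hM j) hj
    obtain ⟨b1, b2, e1⟩ := adj_shift w a1
    obtain ⟨c1, c2, e2⟩ := adj_shift w a2
    have h1 : pos jm = ((pos j).1 - (wdir w).1, (pos j).2 - (wdir w).2) := e1 (by omega)
    have h2 : pos jp = ((pos j).1 - (wdir w).1, (pos j).2 - (wdir w).2) := e2 (by omega)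
    have : jm = jp := hinj (h1.trans h2.symm)
    have : jm.val = jp.val := by rw [this]
    simp only [hjm, hjp] at this
    omega
  -- Step 2
  have hi0 := step1 i0 (le_refl _)
  set a : Fin (4*k) := ⟨2*k - 1, by omega⟩ with ha
  set b : Fin (4*k) := ⟨2*k, by omega⟩ with hb
  have hab : adjPt (pos b) (pos a) := adjPt_symm (hadj a b (by simp only [ha, hb]; try omega))
  have key : wcoord w (pos a) = wcoord w (pos i0) ∧ wcoord w (pos b) = wcoord w (pos i0) := by
    rcases hi0 with hi0 | hi0
    · -- i0 = a
      have hia : a = i0 := Fin.ext (by simp only [ha]; omega)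
      set h2 : Fin (4*k) := ⟨2*k - 2, by omega⟩ with hh2
      have lh : zLabel k h2 = true := (zLabel_iff k h2).2 (by simp only [hh2]; omega)
      have a1 : adjPt (pos h2) (pos a) := hadj h2 a (by simp only [hh2, ha]; try omega)
      have nh : wcoord w (pos h2) < wcoord w (pos i0) := by
        have := hno h2 lh; rw [wallIff] at this; omega
      have haM : wcoord w (pos a) = wcoord w (pos i0) := by rw [hia]
      obtain ⟨f1, f2, e1⟩ := adj_shift w a1
      obtain ⟨d1, d2, e2⟩ := adj_shift w hab
      refine ⟨haM, ?_⟩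
      by_contra hbM
      have hb1 : wcoord w (pos a) - wcoord w (pos b) = 1 := by have := hM b; omega
      have : pos b = pos h2 := (e2 hb1).trans (e1 (by omega)).symm
      have : b = h2 := hinj this
      have : b.val = h2.val := by rw [this]
      simp only [hb, hh2] at this
      omega
    · -- i0 = b
      have hib : b = i0 := Fin.ext (by simp only [hb]; omega)
      set h2 : Fin (4*k) := ⟨2*k + 1, by omega⟩ with hh2
      have lh : zLabel k h2 = true := (zLabel_iff k h2).2 (by simp only [hh2]; omega)
      have a1 : adjPt (pos h2) (pos b) := adjPt_symm (hadj b h2 (by simp only [hh2, hb]; try omega))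
      have nh : wcoord w (pos h2) < wcoord w (pos i0) := by
        have := hno h2 lh; rw [wallIff] at this; omega
      have hbM : wcoord w (pos b) = wcoord w (pos i0) := by rw [hib]
      obtain ⟨f1, f2, e1⟩ := adj_shift w a1
      obtain ⟨d1, d2, e2⟩ := adj_shift w (adjPt_symm hab)
      refine ⟨?_, hbM⟩
      by_contra haM
      have hb1 : wcoord w (pos b) - wcoord w (pos a) = 1 := by have := hM a; omega
      have : pos a = pos h2 := (e2 hb1).trans (e1 (by omega)).symm
      have : a = h2 := hinj this
      have : a.val = h2.val := by rw [this]
      simp only [ha, hh2] at this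
      omega
  exact ⟨(wallIff a).2 (le_of_eq key.1.symm), (wallIff b).2 (le_of_eq key.2.symm),
    fun i hi => step1 i ((wallIff i).1 hi)⟩


/-- In any folding of the open HP chain `Z_{2k}`, either exactly three
walls of the bounding box contain images of H monomers and the fourth wall contains only
the PP edge, or all four walls of the bounding box contain images of H monomers. -/
theorem walls_of_bbox_of_folding_of_z2k
    (k : ℕ) (hk : 1 ≤ k) (pos : Fin (4*k) → Pt) (hf : IsOpenFolding (4*k) pos) :
    (∃ w : Fin 4,
      (∀ i, zLabel k i = true → ¬ onWall (4*k) pos w (pos i)) ∧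
      onWall (4*k) pos w (pos ⟨2*k - 1, by omega⟩) ∧
      onWall (4*k) pos w (pos ⟨2*k, by omega⟩) ∧
      (∀ i, onWall (4*k) pos w (pos i) → i.val = 2*k - 1 ∨ i.val = 2*k) ∧
      (∀ w' : Fin 4, w' ≠ w → ∃ i, zLabel k i = true ∧ onWall (4*k) pos w' (pos i))) ∨
    (∀ w : Fin 4, ∃ i, zLabel k i = true ∧ onWall (4*k) pos w (pos i)) := by

  by_cases hall : ∀ w : Fin 4, ∃ i, zLabel k i = true ∧ onWall (4*k) pos w (pos i)
  · exact Or.inr hall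
  · left
    push_neg at hall
    obtain ⟨w, hw⟩ := hall
    have hw' : ∀ i, zLabel k i = true → ¬ onWall (4*k) pos w (pos i) := hw
    obtain ⟨h1, h2, h3⟩ := core_wall k hk pos hf w hw'
    refine ⟨w, hw', h1, h2, h3, ?_⟩
    intro w' hne
    by_contra hcon
    push_neg at hcon
    obtain ⟨g1, g2, -⟩ := core_wall k hk pos hf w' hcon
    rw [onWall_pos_iff] at h1 h2 g1 g2
    set pa := pos ⟨2*k - 1, by omega⟩ with hpa
    set pb := pos ⟨2*k, by omega⟩ with hpb
    have hab : pa ≠ pb := by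
      intro h
      have := hf.1 h
      have : (2*k - 1 : ℕ) = 2*k := congrArg Fin.val this
      omega
    have hz0 : zLabel k ⟨0, by omega⟩ = true := (zLabel_iff k _).2 (by simp; omega)
    have hkey : wcoord w pa ≤ wcoord w (pos ⟨0, by omega⟩) :=
      wall_clash w w' hne.symm pa pb (pos ⟨0, by omega⟩) hab (h1 ⟨2*k, by omega⟩) (h2 ⟨2*k - 1, by omega⟩) (g1 ⟨2*k, by omega⟩) (g2 ⟨2*k - 1, by omega⟩) (g1 ⟨0, by omega⟩)
    exact hw' ⟨0, by omega⟩ hz0 ((onWall_pos_iff pos w _).2 (fun i => le_trans (h1 i) hkey))
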